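/- arXiv:1511.06903 — 6 statements merged into one kernel-verified Lean document; each statement's English description precedes it below -/
import Mathlib

section
/- Let d > 0, β > 0. Define j(k) = e^{2kd}·(1 + (β/2)k) + e^{4kd}·(1 - (β/2)k) for k ≥ 0. Then j has exactly one positive zero k₀; moreover j(k) > 0 for 0 < k < k₀ and j(k) < 0 for k > k₀. -/
open Real Filter Set

/-- For `d > 0`, `β > 0`, the function
`j(k) = e^{2kd}(1 + (β/2)k) + e^{4kd}(1 - (β/2)k)` has exactly one positive zero `k₀`;
moreover `j(k) > 0` for `0 < k < k₀` and `j(k) < 0` for `k > k₀`. -/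
theorem stmt2 (d β : ℝ) (hd : 0 < d) (hβ : 0 < β) :
    (∃! k₀ : ℝ, 0 < k₀ ∧
      Real.exp (2*k₀*d) * (1 + β/2 * k₀) + Real.exp (4*k₀*d) * (1 - β/2 * k₀) = 0) ∧
    ∀ k₀ : ℝ, 0 < k₀ →
      Real.exp (2*k₀*d) * (1 + β/2 * k₀) + Real.exp (4*k₀*d) * (1 - β/2 * k₀) = 0 →
      (∀ k : ℝ, 0 < k → k < k₀ →
        0 < Real.exp (2*k*d) * (1 + β/2 * k) + Real.exp (4*k*d) * (1 - β/2 * k)) ∧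
      (∀ k : ℝ, k₀ < k →
        Real.exp (2*k*d) * (1 + β/2 * k) + Real.exp (4*k*d) * (1 - β/2 * k) < 0) := by
  set f : ℝ → ℝ := fun k => Real.exp (-(2*k*d)) + 1 - β/2 * k * (1 - Real.exp (-(2*k*d)))
    with hfdef
  have hexp : ∀ k : ℝ, Real.exp (4*k*d) * Real.exp (-(2*k*d)) = Real.exp (2*k*d) := by
    intro k; rw [← Real.exp_add]; ring_nf
  have hrel : ∀ k : ℝ, Real.exp (2*k*d) * (1 + β/2 * k) + Real.exp (4*k*d) * (1 - β/2 * k)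
      = Real.exp (4*k*d) * f k := by
    intro k
    simp only [hfdef]
    linear_combination (-(1 + β/2*k)) * hexp k
  -- f is strictly antitone on Ici 0
  have hanti : StrictAntiOn f (Ici 0) := by
    intro x hx y hy hxy
    simp only [hfdef]
    have hex : Real.exp (-(2*y*d)) < Real.exp (-(2*x*d)) := by
      apply Real.exp_lt_exp.2; nlinarith
    have hex1 : Real.exp (-(2*x*d)) ≤ 1 := by
      rw [← Real.exp_zero]; apply Real.exp_le_exp.2; simp only [mem_Ici] at hx; nlinarith
    have hey0 : 0 < Real.exp (-(2*y*d)) := Real.exp_pos _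
    simp only [mem_Ici] at hx
    have h1 : x*(1 - Real.exp (-(2*x*d))) ≤ x*(1 - Real.exp (-(2*y*d))) :=
      mul_le_mul_of_nonneg_left (by linarith) hx
    have h2 : x*(1 - Real.exp (-(2*y*d))) ≤ y*(1 - Real.exp (-(2*y*d))) :=
      mul_le_mul_of_nonneg_right (le_of_lt hxy) (by linarith)
    have h3 : β/2 * (x*(1 - Real.exp (-(2*x*d)))) ≤ β/2 * (y*(1 - Real.exp (-(2*y*d)))) :=
      mul_le_mul_of_nonneg_left (h1.trans h2) (by positivity)
    nlinarith [h3, hex]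
  have hcont : Continuous f := by
    simp only [hfdef]; continuity
  have hf0 : f 0 = 2 := by simp [hfdef]; norm_num
  -- a point where f is negative
  set K : ℝ := max 1 (4/(β*(1 - Real.exp (-(2*d)))) + 1) with hKdef
  have ht : 0 < 1 - Real.exp (-(2*d)) := by
    have : Real.exp (-(2*d)) < 1 := by
      rw [← Real.exp_zero]; apply Real.exp_lt_exp.2; linarith
    linarith
  have hK1 : 1 ≤ K := le_max_left _ _
  have hKbig : 4/(β*(1 - Real.exp (-(2*d)))) < K :=
    lt_of_lt_of_le (by linarith) (le_max_right _ _)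
  have hfK : f K < 0 := by
    have heK : Real.exp (-(2*K*d)) ≤ Real.exp (-(2*d)) := by
      apply Real.exp_le_exp.2; nlinarith
    have heK1 : Real.exp (-(2*K*d)) ≤ 1 := by
      rw [← Real.exp_zero]; apply Real.exp_le_exp.2; nlinarith
    have h4 : 4 < K * (β*(1 - Real.exp (-(2*d)))) := by
      rw [div_lt_iff₀ (by positivity)] at hKbig; linarith
    simp only [hfdef]
    nlinarith [mul_le_mul_of_nonneg_left heK (show (0:ℝ) ≤ β/2 * K by positivity)]
  -- IVT to get a zero
  have hzero : ∃ k₀ ∈ Icc (0:ℝ) K, f k₀ = 0 := by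
    have h := intermediate_value_Icc' (le_trans zero_le_one hK1) hcont.continuousOn
    have : (0:ℝ) ∈ Icc (f K) (f 0) := by constructor <;> [linarith; linarith [hf0]]
    obtain ⟨k₀, hk₀, hfk₀⟩ := h this
    exact ⟨k₀, hk₀, hfk₀⟩
  obtain ⟨k₀, hk₀mem, hfk₀⟩ := hzero
  have hk₀pos : 0 < k₀ := by
    rcases lt_or_eq_of_le hk₀mem.1 with h | h
    · exact h
    · exfalso; rw [← h] at hfk₀; rw [hf0] at hfk₀; norm_num at hfk₀
  have hjk₀ : Real.exp (2*k₀*d) * (1 + β/2 * k₀) + Real.exp (4*k₀*d) * (1 - β/2 * k₀) = 0 := by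
    rw [hrel, hfk₀, mul_zero]
  -- zeros of j positive correspond to zeros of f
  have hfzero : ∀ k : ℝ, Real.exp (2*k*d) * (1 + β/2 * k) + Real.exp (4*k*d) * (1 - β/2 * k) = 0
      → f k = 0 := by
    intro k hk
    rw [hrel] at hk
    exact (mul_eq_zero.1 hk).resolve_left (Real.exp_ne_zero _)
  constructor
  · refine ⟨k₀, ⟨hk₀pos, hjk₀⟩, ?_⟩
    rintro k ⟨hkpos, hjk⟩
    exact hanti.injOn (le_of_lt hkpos) (le_of_lt hk₀pos) (by rw [hfzero k hjk, hfk₀])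
  · intro k₁ hk₁pos hjk₁
    have hfk₁ : f k₁ = 0 := hfzero k₁ hjk₁
    constructor
    · intro k hk hkk₁
      rw [hrel]
      have : f k₁ < f k := hanti (le_of_lt hk) (le_of_lt hk₁pos) hkk₁
      rw [hfk₁] at this
      positivity
    · intro k hkk₁
      rw [hrel]
      have : f k < f k₁ := hanti (le_of_lt hk₁pos)
        (le_of_lt (lt_trans hk₁pos hkk₁)) hkk₁
      rw [hfk₁] at this
      exact mul_neg_of_pos_of_neg (Real.exp_pos _) this
end

section
/- Let d > 0 and c ≥ 0. Define g(k) = c·k·(1 - e^{4kd}) and j(k) = e^{2kd} + e^{4kd} for k ≥ 0. Then the derivative of g/j satisfies (g/j)'(k) = -c·e^{-2kd}·(e^{2kd} - 1 + 2kd) < 0 for all k > 0 (when c > 0); in particular g/j is strictly decreasing on [0, ∞), (g/j)(0) = 0, and (g/j)(k) → -∞ as k → +∞ when c > 0. -/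
/-!
Writing `x = e^{2kd}`, the quotient is `c k (1 - x²) / (x + x²) = c k (x⁻¹ - 1)`, so `g/j` is
`k ↦ c k (e^{-2kd} - 1)`. Its derivative `-c e^{-2kd} (e^{2kd} - 1 + 2kd)` is negative for
`k > 0` because `e^y > 1 + y`, and it tends to `-∞` as a positive linear factor times a factor
tending to `-1`.
-/

open Real Filter Set

noncomputable def reducedRatio (c d k : ℝ) : ℝ := c * k * (exp (-2 * k * d) - 1)

lemma div_eq_reducedRatio (c d k : ℝ) :
    c * k * (1 - exp (4 * k * d)) / (exp (2 * k * d) + exp (4 * k * d)) = reducedRatio c d k := by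
  have hsq : exp (4 * k * d) = exp (2 * k * d) ^ 2 := by rw [← exp_nat_mul]; ring_nf
  have hinv : exp (-2 * k * d) = (exp (2 * k * d))⁻¹ := by rw [← exp_neg]; ring_nf
  have hx : exp (2 * k * d) ≠ 0 := (exp_pos _).ne'
  have hx' : 1 + exp (2 * k * d) ≠ 0 := by positivity
  rw [reducedRatio, hsq, hinv]
  field_simp
  ring

lemma hasDerivAt_reducedRatio (c d k : ℝ) :
    HasDerivAt (reducedRatio c d)
      (-c * exp (-2 * k * d) * (exp (2 * k * d) - 1 + 2 * k * d)) k := by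
  have hexp : HasDerivAt (fun k => exp (-2 * k * d)) (exp (-2 * k * d) * (-2 * d)) k := by
    simpa using (((hasDerivAt_id k).const_mul (-2)).mul_const d).exp
  have hprod := ((hasDerivAt_id k).const_mul c).mul (hexp.sub_const 1)
  have hinv : exp (2 * k * d) * exp (-2 * k * d) = 1 := by rw [← exp_add]; ring_nf; exact exp_zero
  exact hprod.congr_deriv (by simp only [id]; linear_combination c * hinv)

lemma exp_sub_one_add_pos {y : ℝ} (hy : 0 < y) : 0 < exp y - 1 + y := by
  linarith [add_one_lt_exp hy.ne']

section

variable {c d : ℝ} (hc : 0 < c) (hd : 0 < d)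
include hc hd

lemma deriv_reducedRatio_neg {k : ℝ} (hk : 0 < k) : deriv (reducedRatio c d) k < 0 := by
  rw [(hasDerivAt_reducedRatio c d k).deriv]
  exact mul_neg_of_neg_of_pos (mul_neg_of_neg_of_pos (neg_neg_of_pos hc) (exp_pos _))
    (exp_sub_one_add_pos (by positivity))

lemma strictAntiOn_reducedRatio : StrictAntiOn (reducedRatio c d) (Ici 0) := by
  refine strictAntiOn_of_deriv_neg (convex_Ici 0) (by unfold reducedRatio; fun_prop) ?_
  intro k hk
  rw [interior_Ici] at hk
  exact deriv_reducedRatio_neg hc hd hk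

lemma tendsto_reducedRatio_atBot : Tendsto (reducedRatio c d) atTop atBot := by
  have hlin : Tendsto (fun k : ℝ => c * k) atTop atTop := tendsto_id.const_mul_atTop hc
  have hexp : Tendsto (fun k : ℝ => exp (-2 * k * d)) atTop (nhds 0) := by
    refine tendsto_exp_atBot.comp ?_
    refine (tendsto_id.const_mul_atTop_of_neg (by linarith : -2 * d < 0)).congr fun k => ?_
    rw [id, mul_right_comm]
  exact hlin.atTop_mul_neg (by norm_num : (-1 : ℝ) < 0) (by simpa using hexp.sub_const 1)

end

theorem stmt3_general (d c : ℝ) (hd : 0 < d) :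
    (∀ k : ℝ, 0 < k →
      deriv (fun k : ℝ =>
          c*k*(1 - Real.exp (4*k*d)) / (Real.exp (2*k*d) + Real.exp (4*k*d))) k
        = -c * Real.exp (-2*k*d) * (Real.exp (2*k*d) - 1 + 2*k*d)) ∧
    (0 < c → ∀ k : ℝ, 0 < k →
      deriv (fun k : ℝ =>
          c*k*(1 - Real.exp (4*k*d)) / (Real.exp (2*k*d) + Real.exp (4*k*d))) k < 0) ∧
    (0 < c → StrictAntiOn (fun k : ℝ =>
        c*k*(1 - Real.exp (4*k*d)) / (Real.exp (2*k*d) + Real.exp (4*k*d))) (Set.Ici 0)) ∧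
    c*(0:ℝ)*(1 - Real.exp (4*0*d)) / (Real.exp (2*0*d) + Real.exp (4*0*d)) = 0 ∧
    (0 < c → Filter.Tendsto (fun k : ℝ =>
        c*k*(1 - Real.exp (4*k*d)) / (Real.exp (2*k*d) + Real.exp (4*k*d)))
      Filter.atTop Filter.atBot) := by
  have hfun : (fun k : ℝ =>
      c*k*(1 - Real.exp (4*k*d)) / (Real.exp (2*k*d) + Real.exp (4*k*d))) = reducedRatio c d :=
    funext (div_eq_reducedRatio c d)
  rw [hfun]
  exact ⟨fun k _ => (hasDerivAt_reducedRatio c d k).deriv,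
    fun hc _ hk => deriv_reducedRatio_neg hc hd hk,
    fun hc => strictAntiOn_reducedRatio hc hd, by simp,
    fun hc => tendsto_reducedRatio_atBot hc hd⟩

/-- For `d > 0`, `c ≥ 0`, with `g(k) = c·k·(1 - e^{4kd})` and `j(k) = e^{2kd} + e^{4kd}`,
the derivative of `g/j` equals `-c·e^{-2kd}·(e^{2kd} - 1 + 2kd)` for all `k > 0`, which is
negative when `c > 0`; in particular `g/j` is strictly decreasing on `[0, ∞)` (when `c > 0`),
`(g/j)(0) = 0`, and `(g/j)(k) → -∞` as `k → +∞` when `c > 0`. -/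
theorem stmt3 (d c : ℝ) (hd : 0 < d) (hc : 0 ≤ c) :
    (∀ k : ℝ, 0 < k →
      deriv (fun k : ℝ =>
          c*k*(1 - Real.exp (4*k*d)) / (Real.exp (2*k*d) + Real.exp (4*k*d))) k
        = -c * Real.exp (-2*k*d) * (Real.exp (2*k*d) - 1 + 2*k*d)) ∧
    (0 < c → ∀ k : ℝ, 0 < k →
      deriv (fun k : ℝ =>
          c*k*(1 - Real.exp (4*k*d)) / (Real.exp (2*k*d) + Real.exp (4*k*d))) k < 0) ∧
    (0 < c → StrictAntiOn (fun k : ℝ =>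
        c*k*(1 - Real.exp (4*k*d)) / (Real.exp (2*k*d) + Real.exp (4*k*d))) (Set.Ici 0)) ∧
    c*(0:ℝ)*(1 - Real.exp (4*0*d)) / (Real.exp (2*0*d) + Real.exp (4*0*d)) = 0 ∧
    (0 < c → Filter.Tendsto (fun k : ℝ =>
        c*k*(1 - Real.exp (4*k*d)) / (Real.exp (2*k*d) + Real.exp (4*k*d)))
      Filter.atTop Filter.atBot) :=
  stmt3_general d c hd
end

section
/- Let d > 0, α > 0, c ≥ 0. Define F(k) = (g/j)(k) - h(k) with g(k) = c·k·(1 - e^{4kd}), j(k) = e^{2kd} + e^{4kd}, and h(k) = (-2α - 4k)e^{-2kd} - 2α + 4k. Then the equation F(k) = 0 has exactly one solution k > 0. -/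
open Real Filter Set

private lemma stmt4_key (d α c k : ℝ) :
    c*k*(1 - Real.exp (4*k*d)) / (Real.exp (2*k*d) + Real.exp (4*k*d))
        - ((-2*α - 4*k) * Real.exp (-2*k*d) - 2*α + 4*k)
      = (c+4)*k*(Real.exp (-(2*k*d)) - 1) + 2*α*Real.exp (-(2*k*d)) + 2*α := by
  have h4 : Real.exp (4*k*d) = Real.exp (2*k*d) * Real.exp (2*k*d) := by
    rw [← Real.exp_add]; ring_nf
  have hneg : Real.exp (-2*k*d) = (Real.exp (2*k*d))⁻¹ := by
    rw [show (-2*k*d) = -(2*k*d) by ring, Real.exp_neg]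
  have hneg' : Real.exp (-(2*k*d)) = (Real.exp (2*k*d))⁻¹ := Real.exp_neg _
  have hE := Real.exp_pos (2*k*d)
  rw [h4, hneg, hneg']
  field_simp
  ring

private lemma stmt4_anti (d α c : ℝ) (hd : 0 < d) (hα : 0 < α) (hc : 0 ≤ c) :
    StrictAntiOn (fun k => (c+4)*k*(Real.exp (-(2*k*d)) - 1)
      + 2*α*Real.exp (-(2*k*d)) + 2*α) (Set.Ici 0) := by
  intro a ha b hb hab
  simp only [Set.mem_Ici] at ha hb
  have hlt : -(2*b*d) < -(2*a*d) := by nlinarith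
  have he : Real.exp (-(2*b*d)) < Real.exp (-(2*a*d)) := Real.exp_lt_exp.2 hlt
  have hea : Real.exp (-(2*a*d)) ≤ 1 := by
    rw [Real.exp_le_one_iff]; nlinarith
  have heb0 := Real.exp_pos (-(2*b*d))
  have h1 : a * (1 - Real.exp (-(2*a*d))) ≤ b * (1 - Real.exp (-(2*b*d))) := by
    apply mul_le_mul (le_of_lt hab) (by linarith) (by linarith) (le_of_lt (lt_of_le_of_lt ha hab))
  have hc4 : (0:ℝ) < c + 4 := by linarith
  have h2 : (c+4)*b*(Real.exp (-(2*b*d)) - 1) ≤ (c+4)*a*(Real.exp (-(2*a*d)) - 1) := by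
    nlinarith
  have h3 : 2*α*Real.exp (-(2*b*d)) < 2*α*Real.exp (-(2*a*d)) :=
    mul_lt_mul_of_pos_left he (by linarith)
  dsimp only
  linarith

/-- For `d > 0`, `α > 0`, `c ≥ 0`, the equation `(g/j)(k) = h(k)` with
`g(k) = c·k·(1 - e^{4kd})`, `j(k) = e^{2kd} + e^{4kd}`,
`h(k) = (-2α - 4k)e^{-2kd} - 2α + 4k` has exactly one positive solution. -/
theorem stmt4 (d α c : ℝ) (hd : 0 < d) (hα : 0 < α) (hc : 0 ≤ c) :
    ∃! k : ℝ, 0 < k ∧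
      c*k*(1 - Real.exp (4*k*d)) / (Real.exp (2*k*d) + Real.exp (4*k*d))
        - ((-2*α - 4*k) * Real.exp (-2*k*d) - 2*α + 4*k) = 0 := by
  set F : ℝ → ℝ := fun k => (c+4)*k*(Real.exp (-(2*k*d)) - 1)
      + 2*α*Real.exp (-(2*k*d)) + 2*α with hF
  have hkey : ∀ k, c*k*(1 - Real.exp (4*k*d)) / (Real.exp (2*k*d) + Real.exp (4*k*d))
        - ((-2*α - 4*k) * Real.exp (-2*k*d) - 2*α + 4*k) = F k := fun k => stmt4_key d α c k
  have hanti := stmt4_anti d α c hd hα hc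
  have hc4 : (0:ℝ) < c + 4 := by linarith
  have hF0 : F 0 = 4*α := by simp [hF]; ring
  -- choose K with F K < 0
  set K : ℝ := ((c+4)/(2*d) + 4*α + 1)/(c+4) with hK
  have hKpos : 0 < K := by
    apply div_pos _ hc4
    have : 0 < (c+4)/(2*d) := div_pos hc4 (by linarith)
    linarith
  have hFK : F K < 0 := by
    have heK : Real.exp (-(2*K*d)) ≤ 1/(2*K*d) := by
      rw [Real.exp_neg]
      have h1 : 2*K*d ≤ Real.exp (2*K*d) := by
        have := Real.add_one_le_exp (2*K*d); linarith
      have h2 : 0 < 2*K*d := by positivity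
      rw [one_div]
      exact inv_anti₀ h2 h1
    have heK1 : Real.exp (-(2*K*d)) ≤ 1 := by
      rw [Real.exp_le_one_iff]; nlinarith
    have heKpos := Real.exp_pos (-(2*K*d))
    have hterm : (c+4)*K*Real.exp (-(2*K*d)) ≤ (c+4)/(2*d) := by
      have : (c+4)*K*Real.exp (-(2*K*d)) ≤ (c+4)*K*(1/(2*K*d)) := by
        apply mul_le_mul_of_nonneg_left heK (by positivity)
      have heq : (c+4)*K*(1/(2*K*d)) = (c+4)/(2*d) := by
        field_simp
      linarith
    have hcK : (c+4)*K = (c+4)/(2*d) + 4*α + 1 := by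
      rw [hK]; field_simp
    have : F K = (c+4)*K*Real.exp (-(2*K*d)) - (c+4)*K
        + 2*α*Real.exp (-(2*K*d)) + 2*α := by rw [hF]; ring
    nlinarith
  -- existence via IVT on [0, K]
  have hcont : ContinuousOn F (Set.Icc 0 K) := by
    apply Continuous.continuousOn; fun_prop
  have hsub := intermediate_value_Icc' (le_of_lt hKpos) hcont
  have h0mem : (0:ℝ) ∈ Set.Icc (F K) (F 0) := by
    constructor
    · linarith
    · rw [hF0]; linarith
  obtain ⟨k, hkmem, hk0⟩ := hsub h0mem
  have hkpos : 0 < k := by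
    rcases lt_or_eq_of_le hkmem.1 with h | h
    · exact h
    · exfalso; rw [← h] at hk0; rw [hF0] at hk0; linarith
  refine ⟨k, ⟨hkpos, by rw [hkey]; exact hk0⟩, ?_⟩
  rintro y ⟨hy0, hy⟩
  rw [hkey] at hy
  have hyF : F y = F k := by rw [hy, hk0]
  exact hanti.injOn (Set.mem_Ici.2 (le_of_lt hy0)) (Set.mem_Ici.2 (le_of_lt hkpos)) hyF
end

section
/- Combining the previous three statements: for d > 0, α > 0, c ≥ 0 and every ε > 0 there exists d₀ > 0 such that for all d ≥ d₀ the unique positive solution k(d) of (g/j)(k) = h(k) satisfies 2α/(4 + c) < k(d) < 2α/(4 + c) + ε. In particular k(d) → 2α/(4 + c) as d → ∞. -/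
open Real Filter Set

/-! With `E = exp (2kd)` the equation `g/j = h` clears to `E((4+c)k - 2α) = (4+c)k + 2α`.
For `k > 0` the right side is positive, so `(4+c)k > 2α`; and `(E - 1)((4+c)k - 2α) = 4α`
with `E ≥ exp (2 · 2α/(4+c) · d)` shows `k - 2α/(4+c) = O(exp (-4αd/(4+c)))` as `d → ∞`. -/

lemma mul_sub_eq_add_of_div_eq {α c k E : ℝ} (hE : 0 < E)
    (h : c*k*(1 - E^2) / (E + E^2) = (-2*α - 4*k) * E⁻¹ - 2*α + 4*k) :
    E * ((4+c)*k - 2*α) = (4+c)*k + 2*α := by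
  field_simp at h
  refine mul_left_cancel₀ (by positivity : (1 + E) ≠ 0) ?_
  linear_combination -h

lemma exp_mul_sub_eq_add_of_eq {α c k d : ℝ}
    (h : c*k*(1 - exp (4*k*d)) / (exp (2*k*d) + exp (4*k*d))
      = (-2*α - 4*k) * exp (-2*k*d) - 2*α + 4*k) :
    exp (2*k*d) * ((4+c)*k - 2*α) = (4+c)*k + 2*α := by
  have hsq : exp (4*k*d) = exp (2*k*d) ^ 2 := by rw [← exp_nat_mul]; ring_nf
  have hinv : exp (-2*k*d) = (exp (2*k*d))⁻¹ := by rw [← exp_neg]; ring_nf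
  rw [hsq, hinv] at h
  exact mul_sub_eq_add_of_div_eq (exp_pos _) h

section
variable {a x E : ℝ}

lemma lt_of_mul_sub_eq_add (ha : 0 < a) (hx : 0 < x) (hE : 0 < E)
    (h : E * (x - a) = x + a) : a < x :=
  sub_pos.1 (pos_of_mul_pos_right (h ▸ add_pos hx ha) hE.le)

lemma sub_le_of_mul_sub_eq_add {E₀ : ℝ} (ha : 0 < a) (hx : 0 < x) (hE₀ : 1 < E₀)
    (hE : E₀ ≤ E) (h : E * (x - a) = x + a) : x - a ≤ 2*a / (E₀ - 1) := by
  have hxa : 0 < x - a := sub_pos.2 (lt_of_mul_sub_eq_add ha hx (by linarith) h)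
  rw [le_div_iff₀ (by linarith)]
  nlinarith
end

lemma tendsto_div_exp_mul_sub_one {r : ℝ} (hr : 0 < r) (C : ℝ) :
    Tendsto (fun d => C / (exp (r*d) - 1)) atTop (nhds 0) :=
  tendsto_const_nhds.div_atTop <| tendsto_atTop_add_const_right _ _ <|
    tendsto_exp_atTop.comp (tendsto_id.const_mul_atTop hr)

lemma lt_and_le_add_div_exp_sub_one_of_eq {α c k d : ℝ} (hα : 0 < α) (hc : 0 ≤ c) (hk : 0 < k)
    (hd : 0 < d)
    (h : c*k*(1 - exp (4*k*d)) / (exp (2*k*d) + exp (4*k*d))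
      = (-2*α - 4*k) * exp (-2*k*d) - 2*α + 4*k) :
    2*α/(4 + c) < k ∧ k ≤ 2*α/(4 + c) + 4*α/(4 + c) / (exp (2*(2*α/(4 + c))*d) - 1) := by
  have h4c : 0 < 4 + c := by linarith
  have hE := exp_mul_sub_eq_add_of_eq h
  have hx : 0 < (4+c)*k := by positivity
  have hlow : 2*α/(4 + c) < k := by
    rw [div_lt_iff₀ h4c, mul_comm k]
    exact lt_of_mul_sub_eq_add (by positivity) hx (exp_pos _) hE
  refine ⟨hlow, ?_⟩
  have hE₀ : 1 < exp (2*(2*α/(4 + c))*d) := one_lt_exp_iff.2 (by positivity)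
  have hup := sub_le_of_mul_sub_eq_add (by positivity) hx hE₀
    (exp_le_exp.2 (by gcongr)) hE
  calc k = 2*α/(4 + c) + ((4 + c)*k - 2*α)/(4 + c) := by field_simp; ring
    _ ≤ 2*α/(4 + c) + 2*(2*α)/(exp (2*(2*α/(4 + c))*d) - 1)/(4 + c) := by gcongr
    _ = _ := by ring

/-- For `α > 0`, `c ≥ 0`: if for each `d > 0`, `kk d` is a positive solution of
`(g/j)(k) = h(k)` (the unique one), then for every `ε > 0` there is `d₀ > 0` such that for
all `d ≥ d₀` one has `2α/(4+c) < kk d < 2α/(4+c) + ε`; in particular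
`kk d → 2α/(4+c)` as `d → ∞`. -/
theorem stmt7 (α c : ℝ) (hα : 0 < α) (hc : 0 ≤ c) (kk : ℝ → ℝ)
    (hkk : ∀ d : ℝ, 0 < d → 0 < kk d ∧
      c*(kk d)*(1 - Real.exp (4*(kk d)*d))
          / (Real.exp (2*(kk d)*d) + Real.exp (4*(kk d)*d))
        = (-2*α - 4*(kk d)) * Real.exp (-2*(kk d)*d) - 2*α + 4*(kk d)) :
    (∀ ε : ℝ, 0 < ε → ∃ d₀ : ℝ, 0 < d₀ ∧ ∀ d : ℝ, d₀ ≤ d →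
      2*α/(4 + c) < kk d ∧ kk d < 2*α/(4 + c) + ε) ∧
    Filter.Tendsto kk Filter.atTop (nhds (2*α/(4 + c))) := by
  set m := 2*α/(4 + c)
  have hbounds (d : ℝ) (hd : 0 < d) : m < kk d ∧ kk d ≤ m + 4*α/(4 + c) / (exp (2*m*d) - 1) :=
    lt_and_le_add_div_exp_sub_one_of_eq hα hc (hkk d hd).1 hd (hkk d hd).2
  have hupper : Tendsto (fun d => m + 4*α/(4 + c) / (exp (2*m*d) - 1)) atTop (nhds m) := by
    simpa using tendsto_const_nhds.add (tendsto_div_exp_mul_sub_one (r := 2*m) (by positivity) _)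
  have hlim : Tendsto kk atTop (nhds m) := by
    refine tendsto_of_tendsto_of_tendsto_of_le_of_le' tendsto_const_nhds hupper ?_ ?_ <;>
      filter_upwards [eventually_gt_atTop 0] with d hd
    exacts [(hbounds d hd).1.le, (hbounds d hd).2]
  refine ⟨fun ε hε => ?_, hlim⟩
  obtain ⟨d₀, hd₀⟩ := eventually_atTop.1 <|
    (eventually_gt_atTop 0).and (hlim.eventually (gt_mem_nhds (lt_add_of_pos_right m hε)))
  refine ⟨max d₀ 1, by positivity, fun d hd => ?_⟩
  obtain ⟨hdpos, hlt⟩ := hd₀ d (le_of_max_le_left hd)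
  exact ⟨(hbounds d hdpos).1, hlt⟩
end

section
/- Let α, β, γ be as above with β > 0 and not (γ = 0 and αβ = 4). Then e^{-4k₀d}·(g - j·h)(k₀) = ((4+det A)·(4+det A+√Δ)/(2β))·e^{-4k₀d} + (4α - (4+det A+√Δ)²/(4β))·e^{-2k₀d}, where Δ = (4+det A)² - 16αβ, det A = αβ + |γ|², k₀ = (4+det A+√Δ)/(4β); and since 16αβ < (4+det A+√Δ)², this expression is negative for all sufficiently large d > 0. -/
open Real Filter Set

/-!
Since `k₀` is the larger root of `2βk² - (4 + det A)k + 2α`, substituting `E = e^{2k₀d}` into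
`e^{-4k₀d}(g - j·h)(k₀)` kills the constant term in `E` and leaves
`2(4 + det A)k₀ E⁻² + (4α - 4βk₀²) E⁻¹`. The coefficient `4α - 4βk₀²` is negative because
`Δ > 0` forces `16αβ < (4 + det A + √Δ)²`, so the `E⁻¹` term dominates as `d → ∞`.
-/

lemma sixteen_mul_lt_four_add_add_sq {p G : ℝ} (hp : 0 ≤ p) (hG : 0 ≤ G)
    (hne : ¬(G = 0 ∧ p = 4)) : 16 * p < (4 + (p + G)) ^ 2 := by
  -- `(4 + p + G)² - 16p = (p - 4)² + G(8 + 2p + G)`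
  by_cases hG0 : G = 0
  · have hp4 : p - 4 ≠ 0 := sub_ne_zero.mpr fun h => hne ⟨hG0, h⟩
    subst hG0
    nlinarith [sq_pos_of_ne_zero hp4]
  · have hGpos : 0 < G := lt_of_le_of_ne hG (Ne.symm hG0)
    nlinarith [sq_nonneg (p - 4)]

lemma lt_add_sqrt_sq {D c : ℝ} (hD : 0 ≤ D) (hc : 0 < D ^ 2 - c) :
    c < (D + √(D ^ 2 - c)) ^ 2 := by
  have hs : 0 ≤ √(D ^ 2 - c) := sqrt_nonneg _
  nlinarith [mul_nonneg hD hs]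

lemma quadratic_eq_zero_of_eq_add_sqrt {α β D k : ℝ} (hβ : β ≠ 0) (hΔ : 0 ≤ D ^ 2 - 16 * α * β)
    (hk : k = (D + √(D ^ 2 - 16 * α * β)) / (4 * β)) :
    2 * β * k ^ 2 - D * k + 2 * α = 0 := by
  have hdiscrim : discrim (2 * β) (-D) (2 * α) =
      √(D ^ 2 - 16 * α * β) * √(D ^ 2 - 16 * α * β) := by
    rw [mul_self_sqrt hΔ, discrim]; ring
  have hroot := (quadratic_eq_zero_iff (by positivity) hdiscrim k).mpr
    (Or.inl (by rw [hk]; ring_nf))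
  linear_combination hroot

lemma exp_mul_g_sub_j_mul_h_of_root {α β G k d : ℝ}
    (hk : 2 * β * k ^ 2 - (4 + (α * β + G)) * k + 2 * α = 0) :
    exp (-4 * k * d) *
        (G * k * (1 - exp (4 * k * d))
          - (exp (2 * k * d) * (1 + β / 2 * k) + exp (4 * k * d) * (1 - β / 2 * k))
            * ((-2 * α - 4 * k) * exp (-2 * k * d) - 2 * α + 4 * k))
      = 2 * (4 + (α * β + G)) * k * exp (-4 * k * d)
        + (4 * α - 4 * β * k ^ 2) * exp (-2 * k * d) := by
  set E := exp (2 * k * d)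
  have hE : E ≠ 0 := exp_ne_zero _
  have h4 : exp (4 * k * d) = E ^ 2 := by rw [← exp_nat_mul]; ring_nf
  have hneg2 : exp (-2 * k * d) = E⁻¹ := by rw [← exp_neg]; ring_nf
  have hneg4 : exp (-4 * k * d) = (E ^ 2)⁻¹ := by rw [← h4, ← exp_neg]; ring_nf
  rw [h4, hneg2, hneg4]
  field_simp
  linear_combination 2 * (1 + E ^ 2) * hk

lemma eventually_mul_exp_add_mul_exp_neg (a : ℝ) {b k : ℝ} (hb : b < 0) (hk : 0 < k) :
    ∀ᶠ d in atTop, a * exp (-4 * k * d) + b * exp (-2 * k * d) < 0 := by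
  have hdecay : Tendsto (fun d => exp (-2 * k * d)) atTop (nhds 0) :=
    tendsto_exp_atBot.comp (tendsto_id.const_mul_atTop_of_neg (by linarith))
  have hfactor : Tendsto (fun d => a * exp (-2 * k * d) + b) atTop (nhds b) := by
    simpa using (hdecay.const_mul a).add_const b
  filter_upwards [hfactor.eventually (gt_mem_nhds hb)] with d hd
  have hsplit : a * exp (-4 * k * d) + b * exp (-2 * k * d)
      = exp (-2 * k * d) * (a * exp (-2 * k * d) + b) := by
    rw [show -4 * k * d = -2 * k * d + -2 * k * d by ring, exp_add]; ring
  rw [hsplit]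
  exact mul_neg_of_pos_of_neg (exp_pos _) hd

/-- For `α ≥ 0`, `β > 0`, `γ ∈ ℂ` not both `γ = 0` and `αβ = 4`, with
`det A = αβ + |γ|²`, `Δ = (4 + det A)² - 16αβ`, `k₀ = (4 + det A + √Δ)/(4β)`:
for every `d > 0` the identity
`e^{-4k₀d}(g - j·h)(k₀) = ((4+det A)(4+det A+√Δ)/(2β))e^{-4k₀d}
  + (4α - (4+det A+√Δ)²/(4β))e^{-2k₀d}` holds, one has
`16αβ < (4 + det A + √Δ)²`, and the expression is negative for all sufficiently
large `d`. -/
theorem stmt10 (α β : ℝ) (γ : ℂ) (hα : 0 ≤ α) (hβ : 0 < β)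
    (hexc : ¬(γ = 0 ∧ α*β = 4))
    (detA Δ k₀ : ℝ)
    (hdet : detA = α*β + ‖γ‖ ^ 2)
    (hΔ : Δ = (4 + detA)^2 - 16*α*β)
    (hk₀ : k₀ = (4 + detA + Real.sqrt Δ) / (4*β)) :
    (∀ d : ℝ, 0 < d →
      Real.exp (-4*k₀*d) *
        (‖γ‖ ^ 2 * k₀ * (1 - Real.exp (4*k₀*d))
          - (Real.exp (2*k₀*d) * (1 + β/2*k₀) + Real.exp (4*k₀*d) * (1 - β/2*k₀))
            * ((-2*α - 4*k₀) * Real.exp (-2*k₀*d) - 2*α + 4*k₀))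
      = ((4 + detA) * (4 + detA + Real.sqrt Δ) / (2*β)) * Real.exp (-4*k₀*d)
        + (4*α - (4 + detA + Real.sqrt Δ)^2 / (4*β)) * Real.exp (-2*k₀*d)) ∧
    16*α*β < (4 + detA + Real.sqrt Δ)^2 ∧
    ∃ d₀ : ℝ, ∀ d : ℝ, d₀ ≤ d →
      ((4 + detA) * (4 + detA + Real.sqrt Δ) / (2*β)) * Real.exp (-4*k₀*d)
        + (4*α - (4 + detA + Real.sqrt Δ)^2 / (4*β)) * Real.exp (-2*k₀*d) < 0 := by
  have hαβ : 0 ≤ α * β := mul_nonneg hα hβ.le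
  have hΔpos : 0 < Δ := by
    rw [hΔ, hdet, mul_assoc 16, sub_pos]
    exact sixteen_mul_lt_four_add_add_sq hαβ (sq_nonneg _) (by simpa [and_comm] using hexc)
  have hdetpos : 0 < 4 + detA := by rw [hdet]; positivity
  have hroot : 2 * β * k₀ ^ 2 - (4 + detA) * k₀ + 2 * α = 0 :=
    quadratic_eq_zero_of_eq_add_sqrt hβ.ne' (hΔ ▸ hΔpos.le) (by rw [hk₀, ← hΔ])
  have hgap : 16 * α * β < (4 + detA + √Δ) ^ 2 := by
    rw [hΔ]; exact lt_add_sqrt_sq hdetpos.le (hΔ ▸ hΔpos)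
  have hS : 4 + detA + √Δ = 4 * β * k₀ := by rw [hk₀]; field_simp
  have hC1 : (4 + detA) * (4 + detA + √Δ) / (2 * β) = 2 * (4 + detA) * k₀ := by
    rw [hS]; field_simp; ring
  have hC2 : 4 * α - (4 + detA + √Δ) ^ 2 / (4 * β) = 4 * α - 4 * β * k₀ ^ 2 := by
    rw [hS]; field_simp
  have hC2neg : 4 * α - (4 + detA + √Δ) ^ 2 / (4 * β) < 0 := by
    rw [sub_neg, lt_div_iff₀ (by positivity)]; linarith
  have hk₀pos : 0 < k₀ := by rw [hk₀]; positivity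
  refine ⟨fun d _ => ?_, hgap,
    eventually_atTop.mp (eventually_mul_exp_add_mul_exp_neg _ hC2neg hk₀pos)⟩
  rw [hC1, hC2, hdet]
  exact exp_mul_g_sub_j_mul_h_of_root (hdet ▸ hroot)
end

section
/- Let α ≥ 0, β ≥ 0, γ ∈ ℂ with α + β > 0, and d > 0. A number λ = -k² with k > 0 is an eigenvalue of the operator H_{A,d} = -d²/dx² on (-d,0) ∪ (0,d) with Neumann conditions at ±d and the interface conditions (A.1) at 0 if and only if g(k) = h(k)·j(k), where g(k) = |γ|²·k·(1 - e^{4kd}), h(k) = (-2α - 4k)e^{-2kd} - 2α + 4k, and j(k) = e^{2kd}(1 + (β/2)k) + e^{4kd}(1 - (β/2)k). -/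
open Real Set
open scoped Matrix

/-! On each half-interval the Neumann condition pins the solution of `ψ'' = k²ψ` down to a
multiple of `cosh k(x ± d)`: the quantities `e^{±kx}(ψ' ∓ kψ)` are constant, so a solution with
`ψ'(x₀) = 0` equals `ψ(x₀) cosh k(x - x₀)`. Eigenfunctions are therefore parametrised by
`(ψ₋(-d), ψ₊(d)) ∈ ℂ²`, on which the interface conditions become a `2 × 2` linear system.
Its determinant is `(g - h·j) / (8 e^{2kd})`, so a nontrivial solution exists iff `g = h·j`. -/

lemma exp_mul_deriv_sub_mul_eq {f : ℝ → ℂ} (hf : ContDiff ℝ 2 f) (c : ℂ) {a b : ℝ}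
    (hode : ∀ x ∈ Icc a b, deriv (deriv f) x = c ^ 2 * f x) {x y : ℝ}
    (hx : x ∈ Icc a b) (hy : y ∈ Icc a b) :
    Complex.exp (c * x) * (deriv f x - c * f x) = Complex.exp (c * y) * (deriv f y - c * f y) := by
  have hf' : Differentiable ℝ f := hf.differentiable two_ne_zero
  have hf'' : Differentiable ℝ (deriv f) := by
    have : ContDiff ℝ (1 + 1) f := hf
    exact (contDiff_succ_iff_deriv.mp this).2.2.differentiable one_ne_zero
  have hexp (t : ℝ) : HasDerivAt (fun s : ℝ => Complex.exp (c * s)) (c * Complex.exp (c * t)) t := by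
    simpa only [mul_one, mul_comm] using (((hasDerivAt_id' (t : ℂ)).const_mul c).cexp).comp_ofReal
  have hconst : ∀ t ∈ Icc a b, Complex.exp (c * t) * (deriv f t - c * f t)
      = Complex.exp (c * a) * (deriv f a - c * f a) := by
    refine constant_of_has_deriv_right_zero ?_ fun t ht => ?_
    · exact ((by fun_prop : Continuous fun s : ℝ => Complex.exp (c * s)).mul
        (hf''.continuous.sub (continuous_const.mul hf'.continuous))).continuousOn
    · have h := (hexp t).mul ((hf'' t).hasDerivAt.sub ((hf' t).hasDerivAt.const_mul c))
      refine (h.congr_deriv ?_).hasDerivWithinAt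
      simp only [Pi.sub_apply, hode t (Ico_subset_Icc_self ht)]
      ring
  rw [hconst x hx, hconst y hy]

lemma eq_mul_ccosh_of_deriv_eq_zero {f : ℝ → ℂ} (hf : ContDiff ℝ 2 f) {c : ℂ} (hc : c ≠ 0)
    {a b : ℝ} (hode : ∀ x ∈ Icc a b, deriv (deriv f) x = c ^ 2 * f x) {x₀ : ℝ}
    (hx₀ : x₀ ∈ Icc a b) (hN : deriv f x₀ = 0) {x : ℝ} (hx : x ∈ Icc a b) :
    f x = f x₀ * Complex.cosh (c * (x - x₀)) ∧
      deriv f x = f x₀ * c * Complex.sinh (c * (x - x₀)) := by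
  have h₁ := exp_mul_deriv_sub_mul_eq hf c hode hx hx₀
  have h₂ := exp_mul_deriv_sub_mul_eq hf (-c) (by simpa only [neg_sq] using hode) hx hx₀
  rw [hN] at h₁ h₂
  simp only [neg_mul, sub_neg_eq_add, zero_add] at h₂
  have hinv : Complex.exp (-(c * x)) * Complex.exp (c * x) = 1 := by
    rw [← Complex.exp_add, neg_add_cancel, Complex.exp_zero]
  have hneg : Complex.exp (-(c * (x - x₀))) = Complex.exp (c * x₀) * Complex.exp (-(c * x)) := by
    rw [← Complex.exp_add]; congr 1; ring
  have hpos : Complex.exp (c * (x - x₀)) = Complex.exp (-(c * x₀)) * Complex.exp (c * x) := by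
    rw [← Complex.exp_add]; congr 1; ring
  have e₁ : deriv f x - c * f x = -(c * f x₀) * Complex.exp (-(c * (x - x₀))) := by
    linear_combination Complex.exp (-(c * x)) * h₁ - (deriv f x - c * f x) * hinv
      + c * f x₀ * hneg
  have e₂ : deriv f x + c * f x = c * f x₀ * Complex.exp (c * (x - x₀)) := by
    linear_combination Complex.exp (c * x) * h₂ - (deriv f x + c * f x) * hinv
      - c * f x₀ * hpos
  have hcosh := Complex.two_cosh (c * (x - x₀))
  have hsinh := Complex.two_sinh (c * (x - x₀))
  refine ⟨mul_left_cancel₀ (mul_ne_zero two_ne_zero hc) ?_, ?_⟩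
  · linear_combination e₂ - e₁ - c * f x₀ * hcosh
  · linear_combination (e₁ + e₂) / 2 - c * f x₀ * hsinh / 2

section CoshSolution

variable (c : ℂ) (x₀ : ℝ)

lemma hasDerivAt_ccosh_mul_sub (x : ℝ) :
    HasDerivAt (fun t : ℝ => Complex.cosh (c * (t - x₀))) (c * Complex.sinh (c * (x - x₀))) x := by
  simpa only [mul_one, mul_comm] using
    ((((hasDerivAt_id' (x : ℂ)).sub_const (x₀ : ℂ)).const_mul c).ccosh).comp_ofReal

lemma hasDerivAt_csinh_mul_sub (x : ℝ) :
    HasDerivAt (fun t : ℝ => Complex.sinh (c * (t - x₀))) (c * Complex.cosh (c * (x - x₀))) x := by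
  simpa only [mul_one, mul_comm] using
    ((((hasDerivAt_id' (x : ℂ)).sub_const (x₀ : ℂ)).const_mul c).csinh).comp_ofReal

lemma deriv_const_mul_ccosh_mul_sub (a : ℂ) :
    deriv (fun t : ℝ => a * Complex.cosh (c * (t - x₀)))
      = fun t : ℝ => a * c * Complex.sinh (c * (t - x₀)) :=
  funext fun x => by
    simpa only [mul_assoc] using ((hasDerivAt_ccosh_mul_sub c x₀ x).const_mul a).deriv

lemma deriv_const_mul_csinh_mul_sub (a : ℂ) :
    deriv (fun t : ℝ => a * Complex.sinh (c * (t - x₀)))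
      = fun t : ℝ => a * c * Complex.cosh (c * (t - x₀)) :=
  funext fun x => by
    simpa only [mul_assoc] using ((hasDerivAt_csinh_mul_sub c x₀ x).const_mul a).deriv

lemma contDiff_ccosh_mul_sub {n : WithTop ℕ∞} :
    ContDiff ℝ n (fun t : ℝ => Complex.cosh (c * (t - x₀))) :=
  (Complex.contDiff_cosh.restrict_scalars ℝ).comp
    (contDiff_const.mul (Complex.ofRealCLM.contDiff.sub contDiff_const))

end CoshSolution

def IsInterfaceEigenpair (α β d : ℝ) (γ : ℂ) (k : ℝ) (ψm ψp : ℝ → ℂ) : Prop :=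
  ContDiff ℝ 2 ψm ∧ ContDiff ℝ 2 ψp ∧
    (¬(∀ x ∈ Icc (-d) 0, ψm x = 0) ∨ ¬(∀ x ∈ Icc 0 d, ψp x = 0)) ∧
    (∀ x ∈ Icc (-d) 0, -(deriv (deriv ψm) x) = -(k:ℂ)^2 * ψm x) ∧
    (∀ x ∈ Icc 0 d, -(deriv (deriv ψp) x) = -(k:ℂ)^2 * ψp x) ∧
    deriv ψm 0 - deriv ψp 0
      = (α:ℂ)/2 * (ψm 0 + ψp 0) + γ/2 * (deriv ψm 0 + deriv ψp 0) ∧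
    ψm 0 - ψp 0
      = -(starRingEnd ℂ γ)/2 * (ψm 0 + ψp 0) + (β:ℂ)/2 * (deriv ψm 0 + deriv ψp 0) ∧
    deriv ψm (-d) = 0 ∧ deriv ψp d = 0

/-- The interface conditions at `0` for `ψ₋ = a cosh k(x + d)`, `ψ₊ = b cosh k(x - d)`, whose
Cauchy data at `0` are `(a C, a S)` and `(b C, -b S)` with `C = cosh kd`, `S = k sinh kd`. -/
noncomputable def interfaceMatrix (α β : ℝ) (γ C S : ℂ) : Matrix (Fin 2) (Fin 2) ℂ :=
  !![S - α / 2 * C - γ / 2 * S, S - α / 2 * C + γ / 2 * S;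
    C + starRingEnd ℂ γ / 2 * C - β / 2 * S, -C + starRingEnd ℂ γ / 2 * C + β / 2 * S]

lemma interfaceMatrix_mulVec_eq_zero_iff (α β : ℝ) (γ C S : ℂ) (v : Fin 2 → ℂ) :
    interfaceMatrix α β γ C S *ᵥ v = 0 ↔
      (v 0 * S - -(v 1 * S)
          = (α:ℂ)/2 * (v 0 * C + v 1 * C) + γ/2 * (v 0 * S + -(v 1 * S)) ∧
        v 0 * C - v 1 * C
          = -(starRingEnd ℂ γ)/2 * (v 0 * C + v 1 * C) + (β:ℂ)/2 * (v 0 * S + -(v 1 * S))) := by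
  simp only [interfaceMatrix, funext_iff, Fin.forall_fin_two, Matrix.mulVec, dotProduct,
    Fin.sum_univ_two, Matrix.of_apply, Matrix.cons_val', Matrix.cons_val_zero,
    Matrix.cons_val_fin_one, Matrix.cons_val_one, Pi.zero_apply]
  refine and_congr ⟨fun h => ?_, fun h => ?_⟩ ⟨fun h => ?_, fun h => ?_⟩ <;>
    linear_combination h

lemma det_interfaceMatrix (α β : ℝ) (γ C S : ℂ) :
    (interfaceMatrix α β γ C S).det
      = -2 * ((S - α / 2 * C) * (C - β / 2 * S) + ‖γ‖ ^ 2 / 4 * S * C) := by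
  rw [interfaceMatrix, Matrix.det_fin_two_of]
  have : γ * starRingEnd ℂ γ = (‖γ‖ ^ 2 : ℝ) := by rw [Complex.mul_conj, Complex.sq_norm]
  push_cast at this
  linear_combination (-(S * C) / 2) * this

lemma det_interfaceMatrix_eq_zero_iff (α β : ℝ) (γ : ℂ) (k d : ℝ) :
    (interfaceMatrix α β γ (Complex.cosh (k * d)) (k * Complex.sinh (k * d))).det = 0 ↔
      (k * sinh (k * d) - α / 2 * cosh (k * d)) * (cosh (k * d) - β / 2 * (k * sinh (k * d)))
        + ‖γ‖ ^ 2 / 4 * (k * sinh (k * d)) * cosh (k * d) = 0 := by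
  rw [det_interfaceMatrix, mul_eq_zero, or_iff_right (by norm_num)]
  exact_mod_cast Iff.rfl

lemma secular_equation_iff (α β g k d : ℝ) :
    (k * sinh (k * d) - α / 2 * cosh (k * d)) * (cosh (k * d) - β / 2 * (k * sinh (k * d)))
        + g / 4 * (k * sinh (k * d)) * cosh (k * d) = 0 ↔
      g * k * (1 - exp (4 * k * d))
        = ((-2 * α - 4 * k) * exp (-2 * k * d) - 2 * α + 4 * k)
          * (exp (2 * k * d) * (1 + β / 2 * k) + exp (4 * k * d) * (1 - β / 2 * k)) := by
  have hE : exp (k * d) ≠ 0 := (exp_pos _).ne'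
  have h4 : exp (4 * k * d) = exp (k * d) ^ 4 := by rw [← exp_nat_mul]; ring_nf
  have h2 : exp (2 * k * d) = exp (k * d) ^ 2 := by rw [← exp_nat_mul]; ring_nf
  have hm2 : exp (-2 * k * d) = (exp (k * d) ^ 2)⁻¹ := by rw [← h2, ← exp_neg]; ring_nf
  rw [← sub_eq_zero (a := g * k * _), h4, h2, hm2, cosh_eq, sinh_eq, exp_neg]
  set E := exp (k * d)
  have key : g * k * (1 - E ^ 4) - ((-2 * α - 4 * k) * (E ^ 2)⁻¹ - 2 * α + 4 * k)
      * (E ^ 2 * (1 + β / 2 * k) + E ^ 4 * (1 - β / 2 * k))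
      = -16 * E ^ 2 * ((k * ((E - E⁻¹) / 2) - α / 2 * ((E + E⁻¹) / 2)) *
          ((E + E⁻¹) / 2 - β / 2 * (k * ((E - E⁻¹) / 2))) +
        g / 4 * (k * ((E - E⁻¹) / 2)) * ((E + E⁻¹) / 2)) := by
    field_simp
    ring
  rw [key, mul_eq_zero, or_iff_right (mul_ne_zero (by norm_num) (pow_ne_zero 2 hE))]

lemma IsInterfaceEigenpair.interfaceMatrix_mulVec_eq_zero {α β d : ℝ} {γ : ℂ} {k : ℝ}
    {ψm ψp : ℝ → ℂ} (h : IsInterfaceEigenpair α β d γ k ψm ψp) (hd : 0 ≤ d) (hk : k ≠ 0) :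
    ![ψm (-d), ψp d] ≠ 0 ∧
      interfaceMatrix α β γ (Complex.cosh (k * d)) (k * Complex.sinh (k * d))
        *ᵥ ![ψm (-d), ψp d] = 0 := by
  obtain ⟨hm, hp, hnt, hodem, hodep, hI₁, hI₂, hNm, hNp⟩ := h
  have hk' : (k : ℂ) ≠ 0 := Complex.ofReal_ne_zero.2 hk
  have hm_cosh (x : ℝ) (hx : x ∈ Icc (-d) 0) := eq_mul_ccosh_of_deriv_eq_zero hm hk'
    (fun y hy => by linear_combination -hodem y hy) (left_mem_Icc.2 (by linarith)) hNm hx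
  have hp_cosh (x : ℝ) (hx : x ∈ Icc 0 d) := eq_mul_ccosh_of_deriv_eq_zero hp hk'
    (fun y hy => by linear_combination -hodep y hy) (right_mem_Icc.2 hd) hNp hx
  refine ⟨fun h0 => ?_, ?_⟩
  · have ha : ψm (-d) = 0 := congrFun h0 0
    have hb : ψp d = 0 := congrFun h0 1
    rcases hnt with hnt | hnt
    · exact hnt fun x hx => by rw [(hm_cosh x hx).1, ha, zero_mul]
    · exact hnt fun x hx => by rw [(hp_cosh x hx).1, hb, zero_mul]
  · obtain ⟨hm0, hm0'⟩ := hm_cosh 0 (right_mem_Icc.2 (by linarith))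
    obtain ⟨hp0, hp0'⟩ := hp_cosh 0 (left_mem_Icc.2 hd)
    simp only [Complex.ofReal_zero, Complex.ofReal_neg, zero_sub, sub_neg_eq_add, zero_add,
      mul_neg, Complex.cosh_neg, Complex.sinh_neg] at hm0 hm0' hp0 hp0'
    rw [hm0, hm0', hp0, hp0'] at hI₁ hI₂
    rw [interfaceMatrix_mulVec_eq_zero_iff, Matrix.cons_val_zero, Matrix.cons_val_one,
      Matrix.cons_val_zero]
    exact ⟨by linear_combination hI₁, by linear_combination hI₂⟩

lemma isInterfaceEigenpair_of_interfaceMatrix_mulVec_eq_zero {α β d : ℝ} {γ : ℂ} {k : ℝ}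
    (hd : 0 ≤ d) {v : Fin 2 → ℂ} (hv : v ≠ 0)
    (h : interfaceMatrix α β γ (Complex.cosh (k * d)) (k * Complex.sinh (k * d)) *ᵥ v = 0) :
    IsInterfaceEigenpair α β d γ k (fun x => v 0 * Complex.cosh (k * (x - ↑(-d))))
      (fun x => v 1 * Complex.cosh (k * (x - d))) := by
  rw [interfaceMatrix_mulVec_eq_zero_iff] at h
  refine ⟨contDiff_const.mul (contDiff_ccosh_mul_sub _ _),
    contDiff_const.mul (contDiff_ccosh_mul_sub _ _), ?_, fun x _ => ?_, fun x _ => ?_, ?_, ?_, ?_, ?_⟩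
  · by_contra! h0
    refine hv (funext fun i => ?_)
    fin_cases i
    · simpa only [Fin.zero_eta, Pi.zero_apply, sub_self, mul_zero, Complex.cosh_zero, mul_one]
        using h0.1 (-d) (left_mem_Icc.2 (by linarith))
    · simpa only [Fin.mk_one, Pi.zero_apply, sub_self, mul_zero, Complex.cosh_zero, mul_one]
        using h0.2 d (right_mem_Icc.2 hd)
  all_goals simp only [deriv_const_mul_ccosh_mul_sub, deriv_const_mul_csinh_mul_sub]
  · ring
  · ring
  all_goals simp only [Complex.ofReal_zero, Complex.ofReal_neg, zero_sub, sub_neg_eq_add,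
    zero_add, mul_neg, Complex.cosh_neg, Complex.sinh_neg, sub_self, mul_zero, Complex.sinh_zero]
  · linear_combination h.1
  · linear_combination h.2

theorem stmt19_general (α β d : ℝ) (γ : ℂ)
    (hd : 0 < d) (k : ℝ) (hk : 0 < k) :
    (∃ ψm ψp : ℝ → ℂ, ContDiff ℝ 2 ψm ∧ ContDiff ℝ 2 ψp ∧
      (¬(∀ x ∈ Set.Icc (-d) 0, ψm x = 0) ∨ ¬(∀ x ∈ Set.Icc 0 d, ψp x = 0)) ∧
      (∀ x ∈ Set.Icc (-d) 0, -(deriv (deriv ψm) x) = -(k:ℂ)^2 * ψm x) ∧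
      (∀ x ∈ Set.Icc 0 d, -(deriv (deriv ψp) x) = -(k:ℂ)^2 * ψp x) ∧
      deriv ψm 0 - deriv ψp 0
        = (α:ℂ)/2 * (ψm 0 + ψp 0) + γ/2 * (deriv ψm 0 + deriv ψp 0) ∧
      ψm 0 - ψp 0
        = -(starRingEnd ℂ γ)/2 * (ψm 0 + ψp 0) + (β:ℂ)/2 * (deriv ψm 0 + deriv ψp 0) ∧
      deriv ψm (-d) = 0 ∧ deriv ψp d = 0)
    ↔ ‖γ‖ ^ 2 * k * (1 - Real.exp (4*k*d))
        = ((-2*α - 4*k) * Real.exp (-2*k*d) - 2*α + 4*k)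
          * (Real.exp (2*k*d) * (1 + β/2*k) + Real.exp (4*k*d) * (1 - β/2*k)) := by
  change (∃ ψm ψp, IsInterfaceEigenpair α β d γ k ψm ψp) ↔ _
  rw [← secular_equation_iff, ← det_interfaceMatrix_eq_zero_iff,
    ← Matrix.exists_mulVec_eq_zero_iff]
  constructor
  · rintro ⟨ψm, ψp, h⟩
    exact ⟨_, h.interfaceMatrix_mulVec_eq_zero hd.le hk.ne'⟩
  · rintro ⟨v, hv, hMv⟩
    exact ⟨_, _, isInterfaceEigenpair_of_interfaceMatrix_mulVec_eq_zero hd.le hv hMv⟩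

/-- For `α ≥ 0`, `β ≥ 0`, `γ ∈ ℂ` with `α + β > 0`, and `d > 0`: a number `λ = -k²` with
`k > 0` is an eigenvalue of the Laplacian on `(-d,0) ∪ (0,d)` with Neumann conditions at
`±d` and the generalized interface conditions at `0` if and only if
`g(k) = h(k)·j(k)` with `g(k) = |γ|²k(1 - e^{4kd})`,
`h(k) = (-2α - 4k)e^{-2kd} - 2α + 4k`,
`j(k) = e^{2kd}(1 + (β/2)k) + e^{4kd}(1 - (β/2)k)`. -/
theorem stmt19 (α β d : ℝ) (γ : ℂ) (hα : 0 ≤ α) (hβ : 0 ≤ β) (hαβ : 0 < α + β)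
    (hd : 0 < d) (k : ℝ) (hk : 0 < k) :
    (∃ ψm ψp : ℝ → ℂ, ContDiff ℝ 2 ψm ∧ ContDiff ℝ 2 ψp ∧
      (¬(∀ x ∈ Set.Icc (-d) 0, ψm x = 0) ∨ ¬(∀ x ∈ Set.Icc 0 d, ψp x = 0)) ∧
      (∀ x ∈ Set.Icc (-d) 0, -(deriv (deriv ψm) x) = -(k:ℂ)^2 * ψm x) ∧
      (∀ x ∈ Set.Icc 0 d, -(deriv (deriv ψp) x) = -(k:ℂ)^2 * ψp x) ∧
      deriv ψm 0 - deriv ψp 0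
        = (α:ℂ)/2 * (ψm 0 + ψp 0) + γ/2 * (deriv ψm 0 + deriv ψp 0) ∧
      ψm 0 - ψp 0
        = -(starRingEnd ℂ γ)/2 * (ψm 0 + ψp 0) + (β:ℂ)/2 * (deriv ψm 0 + deriv ψp 0) ∧
      deriv ψm (-d) = 0 ∧ deriv ψp d = 0)
    ↔ ‖γ‖ ^ 2 * k * (1 - Real.exp (4*k*d))
        = ((-2*α - 4*k) * Real.exp (-2*k*d) - 2*α + 4*k)
          * (Real.exp (2*k*d) * (1 + β/2*k) + Real.exp (4*k*d) * (1 - β/2*k)) :=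
  stmt19_general α β d γ hd k hk
end
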